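/- Given a colorful k-center instance and a feasible fractional solution (x, z) to LP1, there exists a set C ⊆ P with |C| ≤ k such that |B ∩ ∪_{c ∈ C} 𝓑(c, 2)| ≥ b and |R ∩ ∪_{c ∈ C} 𝓑(c, 2)| ≥ r − max_{j ∈ P : z_j > 0} |𝓕(j) ∩ R|; that is, balls of radius two around at most k points cover at least b blue points and at least r − max_{j : z_j > 0} |𝓕(j) ∩ R| red points. -/

import Mathlib

/-!
Greedily pick centres among the points with `z > 0` in order of decreasing `z`, assigning to each
centre the not yet assigned points of its flower. The unit balls around the centres are disjoint, so
the centres carry total `z`-weight at most `∑ x ≤ k`; and since every assigned point has `z` at most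
that of its centre, weighting centre `j` by `z j` covers fractionally at least `∑_B z` blue and
`∑_R z` red points through the points assigned to it. This is a fractional solution of a knapsack
problem with two covering constraints. Moving along directions that keep the number of centres and
the blue coverage fixed and do not decrease the red one leaves at most two fractional centres; one
exchange between these two loses at most the red points of a single centre, i.e. at most
`max |𝓕(j) ∩ R|`, and leaves one fractional centre, which is rounded up. Assigned points lie in the
flower of their centre, hence within distance two of it.
-/

open scoped Classical

/-- The ball of radius `ρ` around `j` in a finite metric space. -/
noncomputable def bal {P : Type*} [Fintype P] [MetricSpace P] (j : P) (ρ : ℝ) : Finset P :=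
  Finset.univ.filter fun i => dist i j ≤ ρ

/-- The flower centered at `j`. -/
noncomputable def flower {P : Type*} [Fintype P] [MetricSpace P] (j : P) : Finset P :=
  (bal j 1).biUnion fun i => bal i 1

open Finset

section Rounding

variable {ι : Type*}

noncomputable def exitTime (a v : ℝ) : ℝ := if 0 < v then (1 - a) / v else -a / v

lemma exitTime_pos {a v : ℝ} (ha : a ∈ Set.Ioo 0 1) (hv : v ≠ 0) : 0 < exitTime a v := by
  unfold exitTime
  split_ifs with h
  · exact div_pos (by linarith [ha.2]) h
  · exact div_pos_of_neg_of_neg (by linarith [ha.1]) (lt_of_le_of_ne (not_lt.1 h) hv)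

lemma add_mul_mem_Icc_of_le_exitTime {a v t : ℝ} (ha : a ∈ Set.Icc 0 1) (hv : v ≠ 0)
    (ht₀ : 0 ≤ t) (ht : t ≤ exitTime a v) : a + t * v ∈ Set.Icc 0 1 := by
  unfold exitTime at ht
  split_ifs at ht with h
  · rw [le_div_iff₀ h] at ht
    constructor <;> nlinarith [ha.1]
  · have h' : v < 0 := lt_of_le_of_ne (not_lt.1 h) hv
    rw [le_div_iff_of_neg h'] at ht
    constructor <;> nlinarith [ha.2]

lemma add_exitTime_mul_eq_zero_or_eq_one (a : ℝ) {v : ℝ} (hv : v ≠ 0) :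
    a + exitTime a v * v = 0 ∨ a + exitTime a v * v = 1 := by
  unfold exitTime
  split_ifs
  · right; field_simp; ring
  · left; field_simp; ring

noncomputable def fracSupport (D : Finset ι) (w : ι → ℝ) : Finset ι :=
  D.filter fun j => w j ∈ Set.Ioo 0 1

variable {D : Finset ι} {w : ι → ℝ}

lemma fracSupport_subset : fracSupport D w ⊆ D := filter_subset _ _

lemma exists_pos_card_fracSupport_add_smul_lt (hw : ∀ j ∈ D, w j ∈ Set.Icc 0 1) {v : ι → ℝ}
    (hv : ∀ j, v j ≠ 0 → j ∈ fracSupport D w) (hv₀ : v ≠ 0) :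
    ∃ t : ℝ, 0 < t ∧ (∀ j ∈ D, (w + t • v) j ∈ Set.Icc 0 1) ∧
      (fracSupport D (w + t • v)).card < (fracSupport D w).card := by
  obtain ⟨i, hiT, hmin⟩ := ((fracSupport D w).filter (v · ≠ 0)).exists_min_image
    (fun j => exitTime (w j) (v j)) <| by
      obtain ⟨j, hj⟩ := Function.ne_iff.1 hv₀
      exact ⟨j, mem_filter.2 ⟨hv j hj, hj⟩⟩
  obtain ⟨hi, hvi⟩ := mem_filter.1 hiT
  have ht := exitTime_pos (mem_filter.1 hi).2 hvi
  refine ⟨exitTime (w i) (v i), ht, fun j hj => ?_, card_lt_card ?_⟩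
  · by_cases hvj : v j = 0
    · simpa [hvj] using hw j hj
    · exact add_mul_mem_Icc_of_le_exitTime (hw j hj) hvj ht.le
        (hmin j (mem_filter.2 ⟨hv j hvj, hvj⟩))
  · refine (ssubset_iff_of_subset fun j hj => ?_).2 ⟨i, hi, fun hi' => ?_⟩
    · obtain ⟨hjD, hj⟩ := mem_filter.1 hj
      by_cases hvj : v j = 0
      · exact mem_filter.2 ⟨hjD, by simpa [hvj] using hj⟩
      · exact hv j hvj
    · have := (mem_filter.1 hi').2
      simp only [Pi.add_apply, Pi.smul_apply, smul_eq_mul] at this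
      rcases add_exitTime_mul_eq_zero_or_eq_one (w i) hvi with h | h <;>
        simp [h] at this

lemma exists_ne_zero_sum_eq_zero {F : Finset ι} (hF : 2 < F.card) (f g : ι → ℝ) :
    ∃ v : ι → ℝ, (∀ j, v j ≠ 0 → j ∈ F) ∧ v ≠ 0 ∧ ∑ j ∈ F, v j = 0 ∧
      ∑ j ∈ F, v j * f j = 0 ∧ 0 ≤ ∑ j ∈ F, v j * g j := by
  have hdep : ¬LinearIndepOn ℝ (fun j => ![1, f j]) (F : Set ι) := fun h => by
    have := h.fintype_card_le_finrank
    simp at this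
    omega
  obtain ⟨c, hc, i, hi, hci⟩ := not_linearIndepOn_finset_iff.1 hdep
  have hc₀ : ∑ j ∈ F, c j = 0 := by simpa using congrFun hc 0
  have hc₁ : ∑ j ∈ F, c j * f j = 0 := by simpa using congrFun hc 1
  obtain ⟨σ, hσ, hσg⟩ : ∃ σ : ℝ, σ ≠ 0 ∧ 0 ≤ σ * ∑ j ∈ F, c j * g j := by
    rcases le_total 0 (∑ j ∈ F, c j * g j) with h | h
    · exact ⟨1, one_ne_zero, by linarith⟩
    · exact ⟨-1, by norm_num, by linarith⟩
  have hsum : ∀ h : ι → ℝ, ∑ j ∈ F, (if j ∈ F then σ * c j else 0) * h j =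
      σ * ∑ j ∈ F, c j * h j := fun h => by
    rw [mul_sum]
    exact sum_congr rfl fun j hj => by simp [hj, mul_assoc]
  refine ⟨fun j => if j ∈ F then σ * c j else 0, fun j hj => ?_, fun h => ?_, ?_, ?_, ?_⟩
  · by_contra hjF
    simp [hjF] at hj
  · simpa [hi, hσ, hci] using congrFun h i
  · simpa [hc₀] using hsum 1
  · rw [hsum, hc₁, mul_zero]
  · rwa [hsum]

lemma sum_add_smul_mul {F : Finset ι} (hF : F ⊆ D) {v : ι → ℝ} (hv : ∀ j, v j ≠ 0 → j ∈ F)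
    (t : ℝ) (h : ι → ℝ) :
    ∑ j ∈ D, (w + t • v) j * h j = ∑ j ∈ D, w j * h j + t * ∑ j ∈ F, v j * h j := by
  have hvF : ∑ j ∈ F, v j * h j = ∑ j ∈ D, v j * h j :=
    sum_subset hF fun j _ hj => by rw [not_imp_comm.1 (hv j) hj, zero_mul]
  simp only [hvF, Pi.add_apply, Pi.smul_apply, smul_eq_mul, add_mul, sum_add_distrib, mul_sum,
    mul_assoc]

lemma exists_card_fracSupport_lt_of_two_lt (hw : ∀ j ∈ D, w j ∈ Set.Icc 0 1)
    (h : 2 < (fracSupport D w).card) (f g : ι → ℝ) :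
    ∃ w' : ι → ℝ, (∀ j ∈ D, w' j ∈ Set.Icc 0 1) ∧
      (fracSupport D w').card < (fracSupport D w).card ∧ ∑ j ∈ D, w' j = ∑ j ∈ D, w j ∧
      ∑ j ∈ D, w' j * f j = ∑ j ∈ D, w j * f j ∧ ∑ j ∈ D, w j * g j ≤ ∑ j ∈ D, w' j * g j := by
  obtain ⟨v, hvF, hv₀, h₁, hf, hg⟩ := exists_ne_zero_sum_eq_zero h f g
  obtain ⟨t, ht, hbox, hcard⟩ := exists_pos_card_fracSupport_add_smul_lt hw hvF hv₀
  have hsum := sum_add_smul_mul (w := w) fracSupport_subset hvF t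
  refine ⟨w + t • v, hbox, hcard, by simpa [h₁] using hsum 1, by rw [hsum, hf, mul_zero, add_zero],
    by rw [hsum]; nlinarith⟩

lemma exists_card_fracSupport_le_two (hw : ∀ j ∈ D, w j ∈ Set.Icc 0 1) (f g : ι → ℝ) :
    ∃ w' : ι → ℝ, (∀ j ∈ D, w' j ∈ Set.Icc 0 1) ∧ (fracSupport D w').card ≤ 2 ∧
      ∑ j ∈ D, w' j = ∑ j ∈ D, w j ∧ ∑ j ∈ D, w' j * f j = ∑ j ∈ D, w j * f j ∧
      ∑ j ∈ D, w j * g j ≤ ∑ j ∈ D, w' j * g j := by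
  induction hn : (fracSupport D w).card using Nat.strong_induction_on generalizing w with
  | _ n ih =>
    by_cases h : n ≤ 2
    · exact ⟨w, hw, hn ▸ h, rfl, rfl, le_rfl⟩
    obtain ⟨w₁, hw₁, hlt, h₁, hf, hg⟩ := exists_card_fracSupport_lt_of_two_lt hw (by omega) f g
    obtain ⟨w', hw', hle, h₁', hf', hg'⟩ := ih _ (hn ▸ hlt) hw₁ rfl
    exact ⟨w', hw', hle, h₁'.trans h₁, hf'.trans hf, hg.trans hg'⟩

lemma exists_card_fracSupport_le_one_of_eq_two (hw : ∀ j ∈ D, w j ∈ Set.Icc 0 1)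
    (h : (fracSupport D w).card = 2) (f : ι → ℝ) {g : ι → ℝ} {M : ℝ}
    (hg : ∀ j ∈ D, g j ∈ Set.Icc 0 M) :
    ∃ w' : ι → ℝ, (∀ j ∈ D, w' j ∈ Set.Icc 0 1) ∧ (fracSupport D w').card ≤ 1 ∧
      ∑ j ∈ D, w' j = ∑ j ∈ D, w j ∧ ∑ j ∈ D, w j * f j ≤ ∑ j ∈ D, w' j * f j ∧
      ∑ j ∈ D, w j * g j - M ≤ ∑ j ∈ D, w' j * g j := by
  obtain ⟨p, q, hpq, hF⟩ := card_eq_two.1 h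
  wlog hfpq : f q ≤ f p generalizing p q
  · exact this q p hpq.symm (by rw [hF, pair_comm]) (by linarith)
  have hpD : p ∈ D := (mem_filter.1 (hF ▸ mem_insert_self p {q})).1
  have hqD : q ∈ D := (mem_filter.1 (hF ▸ mem_insert_of_mem (mem_singleton_self q))).1
  set v : ι → ℝ := Pi.single p 1 - Pi.single q 1
  have hv : ∀ j, v j ≠ 0 → j ∈ fracSupport D w := fun j hj => by
    by_contra hj'
    rw [hF, mem_insert, mem_singleton, not_or] at hj'
    simp [v, hj'.1, hj'.2] at hj
  have hv₀ : v ≠ 0 := fun h => by simpa [v, hpq] using congrFun h p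
  obtain ⟨t, ht, hbox, hcard⟩ := exists_pos_card_fracSupport_add_smul_lt hw hv hv₀
  have hsum := sum_add_smul_mul (w := w) fracSupport_subset hv t
  have hvsum : ∀ h : ι → ℝ, ∑ j ∈ fracSupport D w, v j * h j = h p - h q := fun h => by
    rw [hF, sum_pair hpq]
    simp [v, hpq, hpq.symm, sub_eq_add_neg]
  have ht₁ : t ≤ 1 := by
    have := (hbox q hqD).1
    simp [v, hpq.symm] at this
    linarith [(hw q hqD).2]
  refine ⟨w + t • v, hbox, by omega, ?_, ?_, ?_⟩
  · have h₁ := hsum 1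
    rw [hvsum] at h₁
    simpa using h₁
  · rw [hsum, hvsum]; nlinarith
  · -- the red loss `t * (g q - g p)` is at most `t * g q ≤ g q ≤ M`
    rw [hsum, hvsum]
    nlinarith [mul_nonneg ht.le (hg p hpD).1, mul_nonneg (sub_nonneg.2 ht₁) (hg q hqD).1,
      (hg q hqD).2]

lemma card_filter_pos_lt_sum_add_one (hw : ∀ j ∈ D, w j ∈ Set.Icc 0 1)
    (h : (fracSupport D w).card ≤ 1) : ((D.filter (0 < w ·)).card : ℝ) < ∑ j ∈ D, w j + 1 := by
  have hsupp : ∑ j ∈ D.filter (0 < w ·), w j = ∑ j ∈ D, w j :=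
    sum_filter_of_ne fun j hj h => lt_of_le_of_ne (hw j hj).1 (Ne.symm h)
  have hfrac : ∑ j ∈ fracSupport D w, (1 - w j) = ∑ j ∈ D.filter (0 < w ·), (1 - w j) := by
    refine sum_subset (fun j hj => ?_) fun j hj hj' => ?_
    · obtain ⟨hjD, hj⟩ := mem_filter.1 hj
      exact mem_filter.2 ⟨hjD, hj.1⟩
    · obtain ⟨hjD, hj⟩ := mem_filter.1 hj
      have : ¬ w j < 1 := fun h => hj' (mem_filter.2 ⟨hjD, hj, h⟩)
      linarith [(hw j hjD).2]
  have hlt : ∑ j ∈ fracSupport D w, (1 - w j) < 1 := by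
    rcases Nat.le_one_iff_eq_zero_or_eq_one.1 h with h | h
    · simp [card_eq_zero.1 h]
    · obtain ⟨a, ha⟩ := card_eq_one.1 h
      have := (mem_filter.1 (ha ▸ mem_singleton_self a)).2.1
      simp [ha, this]
  have hcard : ((D.filter (0 < w ·)).card : ℝ) =
      ∑ j ∈ D.filter (0 < w ·), (1 - w j) + ∑ j ∈ D.filter (0 < w ·), w j := by
    rw [← sum_add_distrib]
    simp
  linarith

lemma sum_mul_le_sum_filter_pos (hw : ∀ j ∈ D, w j ∈ Set.Icc 0 1) {g : ι → ℝ}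
    (hg : ∀ j ∈ D, 0 ≤ g j) : ∑ j ∈ D, w j * g j ≤ ∑ j ∈ D.filter (0 < w ·), g j := by
  rw [sum_filter]
  refine sum_le_sum fun j hj => ?_
  split_ifs with h
  · nlinarith [(hw j hj).2, hg j hj]
  · rw [le_antisymm (not_lt.1 h) (hw j hj).1, zero_mul]

theorem exists_subset_card_le_of_fractional (k : ℕ) {b r M : ℝ} (hM : 0 ≤ M) {f g : ι → ℝ}
    (hf : ∀ j ∈ D, 0 ≤ f j) (hg : ∀ j ∈ D, g j ∈ Set.Icc 0 M) (hw : ∀ j ∈ D, w j ∈ Set.Icc 0 1)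
    (hk : ∑ j ∈ D, w j ≤ k) (hb : b ≤ ∑ j ∈ D, w j * f j) (hr : r ≤ ∑ j ∈ D, w j * g j) :
    ∃ S ⊆ D, S.card ≤ k ∧ b ≤ ∑ j ∈ S, f j ∧ r - M ≤ ∑ j ∈ S, g j := by
  obtain ⟨w₁, hw₁, h₁, hk₁, hb₁, hr₁⟩ := exists_card_fracSupport_le_two hw f g
  obtain ⟨w₂, hw₂, h₂, hk₂, hb₂, hr₂⟩ : ∃ w₂ : ι → ℝ, (∀ j ∈ D, w₂ j ∈ Set.Icc 0 1) ∧
      (fracSupport D w₂).card ≤ 1 ∧ ∑ j ∈ D, w₂ j = ∑ j ∈ D, w₁ j ∧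
      ∑ j ∈ D, w₁ j * f j ≤ ∑ j ∈ D, w₂ j * f j ∧ ∑ j ∈ D, w₁ j * g j - M ≤ ∑ j ∈ D, w₂ j * g j := by
    rcases h₁.lt_or_eq with h | h
    · exact ⟨w₁, hw₁, by omega, rfl, le_rfl, by linarith⟩
    · exact exists_card_fracSupport_le_one_of_eq_two hw₁ h f hg
  refine ⟨D.filter (0 < w₂ ·), filter_subset _ _, ?_, ?_, ?_⟩
  · have := card_filter_pos_lt_sum_add_one hw₂ h₂
    have hlt : ((D.filter (0 < w₂ ·)).card : ℝ) < k + 1 := by linarith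
    exact Nat.lt_succ_iff.1 (by exact_mod_cast hlt)
  · linarith [sum_mul_le_sum_filter_pos hw₂ hf]
  · linarith [sum_mul_le_sum_filter_pos hw₂ fun j hj => (hg j hj).1]

end Rounding

lemma sum_le_sum_mul_card_fiberwise {ι κ : Type*} {s : Finset ι} {t : Finset κ} {c : ι → κ}
    {f : ι → ℝ} {g : κ → ℝ} (h : ∀ i ∈ s, c i ∈ t ∧ f i ≤ g (c i)) :
    ∑ i ∈ s, f i ≤ ∑ j ∈ t, g j * (s.filter (c · = j)).card :=
  calc ∑ i ∈ s, f i ≤ ∑ i ∈ s, g (c i) := sum_le_sum fun i hi => (h i hi).2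
    _ = ∑ j ∈ t, ∑ i ∈ s.filter (c · = j), g j :=
      (sum_fiberwise_of_maps_to' (fun i hi => (h i hi).1) g).symm
    _ = ∑ j ∈ t, g j * (s.filter (c · = j)).card := by simp [mul_comm]

lemma sum_le_sum_of_pairwiseDisjoint {ι κ : Type*} [Fintype ι] {x : ι → ℝ} (hx : ∀ i, 0 ≤ x i)
    {U : κ → Finset ι} {z : κ → ℝ} (hz : ∀ j, z j ≤ ∑ i ∈ U j, x i) {D : Finset κ}
    (hD : (D : Set κ).PairwiseDisjoint U) : ∑ j ∈ D, z j ≤ ∑ i, x i :=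
  calc ∑ j ∈ D, z j ≤ ∑ j ∈ D, ∑ i ∈ U j, x i := sum_le_sum fun j _ => hz j
    _ = ∑ i ∈ D.biUnion U, x i := (sum_biUnion hD).symm
    _ ≤ ∑ i, x i := sum_le_univ_sum_of_nonneg hx

section Flower

variable {P : Type*} [Fintype P] [MetricSpace P]

lemma mem_bal {i j : P} {ρ : ℝ} : i ∈ bal j ρ ↔ dist i j ≤ ρ := by
  simp [bal]

lemma mem_flower {i j : P} : i ∈ flower j ↔ ∃ m, dist m j ≤ 1 ∧ dist i m ≤ 1 := by
  simp [flower, mem_bal]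

lemma self_mem_flower (j : P) : j ∈ flower j :=
  mem_flower.2 ⟨j, by simp, by simp⟩

lemma flower_subset_bal_two (j : P) : flower j ⊆ bal j 2 := fun i hi => by
  obtain ⟨m, h₁, h₂⟩ := mem_flower.1 hi
  exact mem_bal.2 (by linarith [dist_triangle i m j])

lemma disjoint_bal_one_of_notMem_flower {j j' : P} (h : j' ∉ flower j) :
    Disjoint (bal j 1) (bal j' 1) :=
  disjoint_left.2 fun m hm hm' =>
    h (mem_flower.2 ⟨m, mem_bal.1 hm, by rw [dist_comm]; exact mem_bal.1 hm'⟩)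

lemma exists_greedy_clustering (z : P → ℝ) (S : Finset P) :
    ∃ D ⊆ S, (D : Set P).PairwiseDisjoint (bal · 1) ∧
      ∃ c : P → P, ∀ p ∈ S, c p ∈ D ∧ p ∈ flower (c p) ∧ z p ≤ z (c p) := by
  induction S using Finset.strongInduction with
  | H S ih =>
  rcases S.eq_empty_or_nonempty with rfl | hS
  · exact ⟨∅, empty_subset _, by simp, id, by simp⟩
  obtain ⟨j, hjS, hjmax⟩ := S.exists_max_image z hS
  obtain ⟨D, hDS, hD, c, hc⟩ :=
    ih (S.filter (· ∉ flower j)) (filter_ssubset.2 ⟨j, hjS, not_not.2 (self_mem_flower j)⟩)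
  refine ⟨insert j D, insert_subset hjS (hDS.trans (filter_subset _ _)), ?_,
    fun p => if p ∈ flower j then j else c p, fun p hp => ?_⟩
  · rw [coe_insert]
    exact hD.insert fun j' hj' _ =>
      disjoint_bal_one_of_notMem_flower (mem_filter.1 (hDS hj')).2
  · by_cases hpj : p ∈ flower j
    · simp only [if_pos hpj]
      exact ⟨mem_insert_self _ _, hpj, hjmax p hp⟩
    · simp only [if_neg hpj]
      obtain ⟨hpD, hpc, hzp⟩ := hc p (mem_filter.2 ⟨hp, hpj⟩)
      exact ⟨mem_insert_of_mem hpD, hpc, hzp⟩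

end Flower

theorem stmt1_general {P : Type*} [Fintype P] [MetricSpace P]
    (R B : Finset P)
    (k r b : ℕ) (x z : P → ℝ)
    (hx0 : ∀ i, 0 ≤ x i)
    (hz0 : ∀ j, 0 ≤ z j) (hz1 : ∀ j, z j ≤ 1)
    (hcov : ∀ j : P, z j ≤ ∑ i ∈ bal j 1, x i)
    (hk : ∑ i : P, x i ≤ (k : ℝ))
    (hr : (r : ℝ) ≤ ∑ j ∈ R, z j)
    (hb : (b : ℝ) ≤ ∑ j ∈ B, z j) :
    ∃ C : Finset P, C.card ≤ k ∧
      (b : ℤ) ≤ ((B ∩ C.biUnion fun c => bal c 2).card : ℤ) ∧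
      (r : ℤ) - ((Finset.univ.filter fun j => 0 < z j).sup fun j => (flower j ∩ R).card : ℕ)
        ≤ ((R ∩ C.biUnion fun c => bal c 2).card : ℤ) := by
  set S := univ.filter fun j => 0 < z j
  set M := S.sup fun j => (flower j ∩ R).card
  obtain ⟨D, hDS, hD, c, hc⟩ := exists_greedy_clustering z S
  let fiber (T : Finset P) (j : P) : Finset P := (T.filter (0 < z ·)).filter (c · = j)
  have hmass (T : Finset P) : ∑ p ∈ T, z p ≤ ∑ j ∈ D, z j * (fiber T j).card :=
    (sum_filter_of_ne fun p _ h => lt_of_le_of_ne (hz0 p) (Ne.symm h)).symm.trans_le <|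
      sum_le_sum_mul_card_fiberwise fun p hp =>
        have h := hc p (by simpa [S] using (mem_filter.1 hp).2)
        ⟨h.1, h.2.2⟩
  have hcover (T C : Finset P) :
      ∑ j ∈ C, ((fiber T j).card : ℝ) ≤ (T ∩ C.biUnion fun c => bal c 2).card := by
    rw [← Nat.cast_sum, Nat.cast_le, (sum_card_fiberwise_eq_card_filter _ _ _ :
      ∑ j ∈ C, (fiber T j).card = ((T.filter (0 < z ·)).filter (c · ∈ C)).card)]
    refine card_le_card fun p hp => ?_
    obtain ⟨⟨hpT, hpz⟩, hpC⟩ := mem_filter.1 hp |>.imp_left mem_filter.1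
    exact mem_inter.2 ⟨hpT, mem_biUnion.2 ⟨c p, hpC,
      flower_subset_bal_two _ (hc p (by simpa [S] using hpz)).2.1⟩⟩
  have hfiberR (j : P) (hj : j ∈ D) : ((fiber R j).card : ℝ) ∈ Set.Icc 0 (M : ℝ) := by
    refine ⟨Nat.cast_nonneg _, Nat.cast_le.2 ((card_le_card fun p hp => ?_).trans
      (le_sup (f := fun j => (flower j ∩ R).card) (hDS hj)))⟩
    obtain ⟨⟨hpR, hpz⟩, rfl⟩ := mem_filter.1 hp |>.imp_left mem_filter.1
    exact mem_inter.2 ⟨(hc p (by simpa [S] using hpz)).2.1, hpR⟩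
  obtain ⟨C, -, hCk, hCb, hCr⟩ := exists_subset_card_le_of_fractional k (Nat.cast_nonneg M)
    (fun j _ => Nat.cast_nonneg (fiber B j).card) hfiberR (fun j _ => ⟨hz0 j, hz1 j⟩)
    ((sum_le_sum_of_pairwiseDisjoint hx0 hcov hD).trans hk)
    (hb.trans (hmass B)) (hr.trans (hmass R))
  refine ⟨C, hCk, ?_, ?_⟩
  · exact_mod_cast hCb.trans (hcover B C)
  · exact_mod_cast hCr.trans (hcover R C)

/-- given a feasible fractional solution `(x, z)` to LP1, there are at most `k`
balls of radius two covering at least `b` blue points and at least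
`r − max_{j : z j > 0} |𝓕(j) ∩ R|` red points. -/
theorem stmt1 {P : Type*} [Fintype P] [MetricSpace P]
    (R B : Finset P) (hpart : ∀ p : P, (p ∈ R ∧ p ∉ B) ∨ (p ∈ B ∧ p ∉ R))
    (k r b : ℕ) (x z : P → ℝ)
    (hx0 : ∀ i, 0 ≤ x i) (hx1 : ∀ i, x i ≤ 1)
    (hz0 : ∀ j, 0 ≤ z j) (hz1 : ∀ j, z j ≤ 1)
    (hcov : ∀ j : P, z j ≤ ∑ i ∈ bal j 1, x i)
    (hk : ∑ i : P, x i ≤ (k : ℝ))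
    (hr : (r : ℝ) ≤ ∑ j ∈ R, z j)
    (hb : (b : ℝ) ≤ ∑ j ∈ B, z j) :
    ∃ C : Finset P, C.card ≤ k ∧
      (b : ℤ) ≤ ((B ∩ C.biUnion fun c => bal c 2).card : ℤ) ∧
      (r : ℤ) - ((Finset.univ.filter fun j => 0 < z j).sup fun j => (flower j ∩ R).card : ℕ)
        ≤ ((R ∩ C.biUnion fun c => bal c 2).card : ℤ) :=
  stmt1_general R B k r b x z hx0 hz0 hz1 hcov hk hr hb
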